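/- Let G=(V,E) be an undirected connected simple locally finite graph. Then for every function f: V → ℝ and every vertex x, the graph Laplacian satisfies Γ₂(f,f)(x) ≥ (1/2)(Δf(x))² + ((1/2)t(x) − 1)·Γ(f,f)(x), where t(x) = min_{y∼x}(4/d_y + ♯(x,y)/D(x)) and D(x) = max_{y∼x} d_y. -/

import Mathlib

open SimpleGraph Finset

variable {V : Type*}

/-- The probability measure attached to a vertex `x`: uniform on its neighbors. -/
noncomputable def nbrMeasure (G : SimpleGraph V) [G.LocallyFinite] [DecidableRel G.Adj]
    (x z : V) : ℝ :=
  if G.Adj x z then ((G.degree x : ℝ))⁻¹ else 0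

/-- A coupling (transfer plan) between the measures `m_x` and `m_y`. -/
def IsCoupling (G : SimpleGraph V) [G.LocallyFinite] [DecidableRel G.Adj]
    (x y : V) (ξ : V → V → ℝ) : Prop :=
  (∀ u v, 0 ≤ ξ u v) ∧
  (∀ u v, ξ u v ≠ 0 → G.Adj x u ∧ G.Adj y v) ∧
  (∀ u, ∑ v ∈ G.neighborFinset y, ξ u v = nbrMeasure G x u) ∧
  (∀ v, ∑ u ∈ G.neighborFinset x, ξ u v = nbrMeasure G y v)

/-- The transportation distance `W₁(m_x, m_y)`. -/
noncomputable def W1 (G : SimpleGraph V) [G.LocallyFinite] [DecidableRel G.Adj]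
    (x y : V) : ℝ :=
  sInf { c : ℝ | ∃ ξ : V → V → ℝ, IsCoupling G x y ξ ∧
    c = ∑ u ∈ G.neighborFinset x, ∑ v ∈ G.neighborFinset y, (G.dist u v : ℝ) * ξ u v }

/-- Ollivier's Ricci curvature `κ(x,y) = 1 - W₁(m_x,m_y)/d(x,y)`. -/
noncomputable def ricci (G : SimpleGraph V) [G.LocallyFinite] [DecidableRel G.Adj]
    (x y : V) : ℝ :=
  1 - W1 G x y / (G.dist x y : ℝ)

/-- Positive part of a real number: `a₊ = max a 0`. -/
noncomputable def posPart' (a : ℝ) : ℝ := max a 0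

/-- `♯(x,y)`: the number of common neighbors of `x` and `y`. -/
def triangles (G : SimpleGraph V) [G.LocallyFinite] [DecidableEq V] (x y : V) : ℕ :=
  (G.neighborFinset x ∩ G.neighborFinset y).card

/-- The graph Laplacian `Δf(x) = (1/d_x)∑_{y∼x} f(y) - f(x)`. -/
noncomputable def lap (G : SimpleGraph V) [G.LocallyFinite] (f : V → ℝ) (x : V) : ℝ :=
  (G.degree x : ℝ)⁻¹ * ∑ y ∈ G.neighborFinset x, f y - f x

/-- The Bakry–Émery operator `Γ(f,g)(x) = (1/2)(Δ(fg) - fΔg - gΔf)(x)`. -/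
noncomputable def gam (G : SimpleGraph V) [G.LocallyFinite] (f g : V → ℝ) (x : V) : ℝ :=
  (1 / 2) * (lap G (f * g) x - f x * lap G g x - g x * lap G f x)

/-- The Bakry–Émery operator `Γ₂(f,f)(x) = (1/2)(ΔΓ(f,f) - 2Γ(f,Δf))(x)`. -/
noncomputable def gam2 (G : SimpleGraph V) [G.LocallyFinite] (f : V → ℝ) (x : V) : ℝ :=
  (1 / 2) * (lap G (gam G f f) x - 2 * gam G f (lap G f) x)

/-- `D(x) = max_{y∼x} d_y`. -/
def Dmax (G : SimpleGraph V) [G.LocallyFinite] (x : V) : ℕ :=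
  (G.neighborFinset x).sup (fun z => G.degree z)

/-- `t(x) = min_{y∼x} (4/d_y + ♯(x,y)/D(x))`. -/
noncomputable def tfun (G : SimpleGraph V) [G.LocallyFinite] [DecidableEq V] (x : V) : ℝ :=
  ⨅ y : G.neighborSet x,
    (4 / (G.degree (y : V) : ℝ) + (triangles G x (y : V) : ℝ) / (Dmax G x : ℝ))

/-!
At a non-isolated vertex `x` the definitions expand to the identity
`Γ₂(f,f)(x) = ½ (Δf(x))² - Γ(f,f)(x) + (1/4d_x) ∑_{y∼x} (1/d_y) ∑_{z∼y} (f z - 2 f y + f x)²`.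
In the inner sum the term `z = x` is `4 (f y - f x)²`. The terms with `z` a common neighbour of
`x` and `y`, summed over `y ∼ x`, dominate `∑_{y∼x} ♯(x,y) (f y - f x)²`, because the pairs `(y,z)`
and `(z,y)` both occur and `(a - 2b)² + (b - 2a)² ≥ a² + b²`; there `1/d_y ≥ 1/D(x)` is used.
Together the weight of `(f y - f x)²` is at least `4/d_y + ♯(x,y)/D(x) ≥ t(x)`.
-/

lemma sum_sum_sq_le_sum_sum_sq_sub_two_mul {α : Type*} {s : Finset α} {t : α → Finset α}
    (ht : ∀ a b, a ∈ s ∧ b ∈ t a ↔ a ∈ t b ∧ b ∈ s) (g : α → ℝ) :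
    ∑ a ∈ s, ∑ _ ∈ t a, g a ^ 2 ≤ ∑ a ∈ s, ∑ b ∈ t a, (g b - 2 * g a) ^ 2 := by
  have swap_sq : ∑ a ∈ s, ∑ b ∈ t a, g b ^ 2 = ∑ a ∈ s, ∑ _ ∈ t a, g a ^ 2 := sum_comm' ht
  have swap_sub : ∑ a ∈ s, ∑ b ∈ t a, (g a - 2 * g b) ^ 2 =
      ∑ a ∈ s, ∑ b ∈ t a, (g b - 2 * g a) ^ 2 := sum_comm' ht
  have pointwise : ∑ a ∈ s, ∑ b ∈ t a, (g a ^ 2 + g b ^ 2) ≤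
      ∑ a ∈ s, ∑ b ∈ t a, ((g b - 2 * g a) ^ 2 + (g a - 2 * g b) ^ 2) :=
    sum_le_sum fun a _ => sum_le_sum fun b _ => by nlinarith [sq_nonneg (g a - g b)]
  simp only [sum_add_distrib] at pointwise
  linarith

section

variable (G : SimpleGraph V) [G.LocallyFinite] {x y : V}

lemma lap_eq_inv_degree_mul_sum_sub (hx : 0 < G.degree x) (f : V → ℝ) :
    lap G f x = (G.degree x : ℝ)⁻¹ * ∑ y ∈ G.neighborFinset x, (f y - f x) := by
  rw [lap, sum_sub_distrib, sum_const, card_neighborFinset_eq_degree, nsmul_eq_mul, mul_sub]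
  field_simp

lemma gam_eq_inv_two_degree_mul_sum (hx : 0 < G.degree x) (f g : V → ℝ) :
    gam G f g x = (2 * (G.degree x : ℝ))⁻¹ *
      ∑ y ∈ G.neighborFinset x, (f y - f x) * (g y - g x) := by
  have hexpand : ∑ y ∈ G.neighborFinset x, (f y - f x) * (g y - g x) =
      ∑ y ∈ G.neighborFinset x, f y * g y - f x * ∑ y ∈ G.neighborFinset x, g y
        - g x * ∑ y ∈ G.neighborFinset x, f y + G.degree x * (f x * g x) := by
    have hterm : ∀ y, (f y - f x) * (g y - g x) = f y * g y - f x * g y - g x * f y + f x * g x :=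
      fun y => by ring
    simp only [hterm, sum_add_distrib, sum_sub_distrib, ← mul_sum, sum_const,
      card_neighborFinset_eq_degree, nsmul_eq_mul]
    ring
  rw [gam, lap, lap, lap, hexpand]
  simp only [Pi.mul_apply]
  field_simp
  ring

lemma sum_sq_sub_sub_eq (hy : 0 < G.degree y) (f : V → ℝ) (c : ℝ) :
    ∑ z ∈ G.neighborFinset y, (f z - f y - c) ^ 2 =
      2 * G.degree y * gam G f f y - 2 * c * G.degree y * lap G f y + G.degree y * c ^ 2 := by
  rw [gam_eq_inv_two_degree_mul_sum G hy, lap_eq_inv_degree_mul_sum_sub G hy]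
  simp only [sub_sq', sum_add_distrib, sum_sub_distrib, ← mul_sum, ← sum_mul, sum_const,
    card_neighborFinset_eq_degree, nsmul_eq_mul, ← sq]
  field_simp
  ring

lemma gam2_eq (hx : 0 < G.degree x) (f : V → ℝ) :
    gam2 G f x = 1 / 2 * lap G f x ^ 2 - gam G f f x + (4 * (G.degree x : ℝ))⁻¹ *
      ∑ y ∈ G.neighborFinset x,
        (G.degree y : ℝ)⁻¹ * ∑ z ∈ G.neighborFinset y, (f z - 2 * f y + f x) ^ 2 := by
  have hterm : ∀ y ∈ G.neighborFinset x,
      gam G f f y - gam G f f x - (f y - f x) * (lap G f y - lap G f x) =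
        2⁻¹ * ((G.degree y : ℝ)⁻¹ * ∑ z ∈ G.neighborFinset y, (f z - 2 * f y + f x) ^ 2)
          - 2⁻¹ * (f y - f x) ^ 2 - gam G f f x + (f y - f x) * lap G f x := by
    intro y hy
    have hdy := ((mem_neighborFinset G x y).1 hy).degree_pos_right
    have hsplit : ∀ z, f z - 2 * f y + f x = f z - f y - (f y - f x) := fun z => by ring
    simp only [hsplit, sum_sq_sub_sub_eq G hdy]
    field_simp
    ring
  have hsum : gam2 G f x = (2 * (G.degree x : ℝ))⁻¹ * ∑ y ∈ G.neighborFinset x,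
      (gam G f f y - gam G f f x - (f y - f x) * (lap G f y - lap G f x)) := by
    rw [gam2, lap_eq_inv_degree_mul_sum_sub G hx (gam G f f),
      gam_eq_inv_two_degree_mul_sum G hx f (lap G f)]
    simp only [sum_sub_distrib]
    ring
  rw [hsum, sum_congr rfl hterm]
  have hlap : ∑ y ∈ G.neighborFinset x, (f y - f x) = G.degree x * lap G f x := by
    rw [lap_eq_inv_degree_mul_sum_sub G hx]
    field_simp
  have hgam : ∑ y ∈ G.neighborFinset x, (f y - f x) ^ 2 = 2 * G.degree x * gam G f f x := by
    rw [gam_eq_inv_two_degree_mul_sum G hx]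
    simp only [sq]
    field_simp
  rw [sum_add_distrib, sum_sub_distrib, sum_sub_distrib, ← mul_sum, ← mul_sum, ← sum_mul, hlap,
    hgam, sum_const, card_neighborFinset_eq_degree, nsmul_eq_mul]
  field_simp
  ring

-- At an isolated vertex `(degree x)⁻¹ = 0`, so `Δ` degenerates to `-id`.
lemma lap_of_isIsolated (hx : G.IsIsolated x) (f : V → ℝ) : lap G f x = -f x := by
  simp [lap, hx]

lemma gam_of_isIsolated (hx : G.IsIsolated x) (f g : V → ℝ) :
    gam G f g x = f x * g x / 2 := by
  simp only [gam, lap_of_isIsolated G hx, Pi.mul_apply]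
  ring

lemma gam2_of_isIsolated (hx : G.IsIsolated x) (f : V → ℝ) : gam2 G f x = f x ^ 2 / 4 := by
  simp only [gam2, lap_of_isIsolated G hx, gam_of_isIsolated G hx]
  ring

lemma tfun_of_isIsolated [DecidableEq V] (hx : G.IsIsolated x) : tfun G x = 0 := by
  have : IsEmpty (G.neighborSet x) := ⟨fun y => hx y y.2⟩
  exact Real.iInf_of_isEmpty _

lemma degree_le_Dmax_of_adj (hxy : G.Adj x y) : G.degree y ≤ Dmax G x :=
  le_sup (f := fun z => G.degree z) ((mem_neighborFinset G x y).2 hxy)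

lemma tfun_le_of_adj [DecidableEq V] (hxy : G.Adj x y) :
    tfun G x ≤ 4 / (G.degree y : ℝ) + (triangles G x y : ℝ) / (Dmax G x : ℝ) :=
  ciInf_le (Finite.bddBelow_range _) (⟨y, hxy⟩ : G.neighborSet x)

lemma add_sum_inter_neighborFinset_le [DecidableEq V] (hxy : G.Adj x y) {F : V → ℝ}
    (hF : ∀ z, 0 ≤ F z) :
    F x + ∑ z ∈ G.neighborFinset x ∩ G.neighborFinset y, F z ≤ ∑ z ∈ G.neighborFinset y, F z := by
  have hx : x ∉ G.neighborFinset x ∩ G.neighborFinset y := by simp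
  rw [← sum_insert hx]
  refine sum_le_sum_of_subset_of_nonneg (insert_subset_iff.2 ⟨?_, inter_subset_right⟩)
    fun z _ _ => hF z
  simpa using hxy.symm

lemma sum_triangles_div_Dmax_mul_sq_le [DecidableEq V] (f : V → ℝ) (x : V) :
    ∑ y ∈ G.neighborFinset x, (triangles G x y : ℝ) / Dmax G x * (f y - f x) ^ 2 ≤
      ∑ y ∈ G.neighborFinset x, (G.degree y : ℝ)⁻¹ *
        ∑ z ∈ G.neighborFinset x ∩ G.neighborFinset y, (f z - 2 * f y + f x) ^ 2 := by
  have hsymm : ∀ y z, y ∈ G.neighborFinset x ∧ z ∈ G.neighborFinset x ∩ G.neighborFinset y ↔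
      y ∈ G.neighborFinset x ∩ G.neighborFinset z ∧ z ∈ G.neighborFinset x := by
    intro y z
    simp only [mem_inter, mem_neighborFinset, G.adj_comm y z]
    tauto
  calc ∑ y ∈ G.neighborFinset x, (triangles G x y : ℝ) / Dmax G x * (f y - f x) ^ 2
      = (Dmax G x : ℝ)⁻¹ * ∑ y ∈ G.neighborFinset x,
          ∑ _ ∈ G.neighborFinset x ∩ G.neighborFinset y, (f y - f x) ^ 2 := by
        simp only [mul_sum, sum_const, nsmul_eq_mul, triangles]
        exact sum_congr rfl fun y _ => by ring
    _ ≤ (Dmax G x : ℝ)⁻¹ * ∑ y ∈ G.neighborFinset x,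
          ∑ z ∈ G.neighborFinset x ∩ G.neighborFinset y, (f z - f x - 2 * (f y - f x)) ^ 2 :=
        mul_le_mul_of_nonneg_left
          (sum_sum_sq_le_sum_sum_sq_sub_two_mul hsymm (fun v => f v - f x)) (by positivity)
    _ = ∑ y ∈ G.neighborFinset x, (Dmax G x : ℝ)⁻¹ *
          ∑ z ∈ G.neighborFinset x ∩ G.neighborFinset y, (f z - 2 * f y + f x) ^ 2 := by
        rw [mul_sum]
        exact sum_congr rfl fun y _ => by congr 1; exact sum_congr rfl fun z _ => by ring
    _ ≤ _ := by
        refine sum_le_sum fun y hy =>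
          mul_le_mul_of_nonneg_right ?_ (sum_nonneg fun z _ => sq_nonneg _)
        have hxy := (mem_neighborFinset G x y).1 hy
        exact inv_anti₀ (Nat.cast_pos.2 hxy.degree_pos_right)
          (Nat.cast_le.2 (degree_le_Dmax_of_adj G hxy))

lemma tfun_mul_sum_sq_le [DecidableEq V] (f : V → ℝ) (x : V) :
    tfun G x * ∑ y ∈ G.neighborFinset x, (f y - f x) ^ 2 ≤
      ∑ y ∈ G.neighborFinset x,
        (G.degree y : ℝ)⁻¹ * ∑ z ∈ G.neighborFinset y, (f z - 2 * f y + f x) ^ 2 := by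
  calc tfun G x * ∑ y ∈ G.neighborFinset x, (f y - f x) ^ 2
      ≤ ∑ y ∈ G.neighborFinset x,
          (4 / (G.degree y : ℝ) + (triangles G x y : ℝ) / Dmax G x) * (f y - f x) ^ 2 := by
        rw [mul_sum]
        exact sum_le_sum fun y hy => mul_le_mul_of_nonneg_right
          (tfun_le_of_adj G ((mem_neighborFinset G x y).1 hy)) (sq_nonneg _)
    _ ≤ ∑ y ∈ G.neighborFinset x, 4 / (G.degree y : ℝ) * (f y - f x) ^ 2 +
          ∑ y ∈ G.neighborFinset x, (G.degree y : ℝ)⁻¹ *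
            ∑ z ∈ G.neighborFinset x ∩ G.neighborFinset y, (f z - 2 * f y + f x) ^ 2 := by
        simp only [add_mul, sum_add_distrib]
        exact add_le_add le_rfl (sum_triangles_div_Dmax_mul_sq_le G f x)
    _ = ∑ y ∈ G.neighborFinset x, (G.degree y : ℝ)⁻¹ * ((f x - 2 * f y + f x) ^ 2 +
          ∑ z ∈ G.neighborFinset x ∩ G.neighborFinset y, (f z - 2 * f y + f x) ^ 2) := by
        rw [← sum_add_distrib]
        exact sum_congr rfl fun y _ => by ring
    _ ≤ _ := sum_le_sum fun y hy => mul_le_mul_of_nonneg_left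
          (add_sum_inter_neighborFinset_le G ((mem_neighborFinset G x y).1 hy)
            fun z => sq_nonneg (f z - 2 * f y + f x))
          (inv_nonneg.2 (Nat.cast_nonneg _))

end

theorem CD_inequality_triangles_general (G : SimpleGraph V) [G.LocallyFinite]
    [DecidableEq V]
    (f : V → ℝ) (x : V) :
    gam2 G f x ≥
      (1 / 2) * (lap G f x) ^ 2 + ((1 / 2) * tfun G x - 1) * gam G f f x := by
  by_cases hx : G.IsIsolated x
  · rw [gam2_of_isIsolated G hx, lap_of_isIsolated G hx, gam_of_isIsolated G hx,
      tfun_of_isIsolated G hx]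
    linarith [sq_nonneg (f x)]
  have hdeg : 0 < G.degree x := (G.degree_pos x).2 hx
  have hgam : gam G f f x =
      (2 * (G.degree x : ℝ))⁻¹ * ∑ y ∈ G.neighborFinset x, (f y - f x) ^ 2 := by
    simp only [gam_eq_inv_two_degree_mul_sum G hdeg, sq]
  have hbound := mul_le_mul_of_nonneg_left (tfun_mul_sum_sq_le G f x)
    (by positivity : (0 : ℝ) ≤ (4 * (G.degree x : ℝ))⁻¹)
  rw [ge_iff_le, gam2_eq G hdeg, hgam]
  linear_combination hbound

/-- On a connected locally finite graph, the Laplacian satisfies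
`Γ₂(f,f)(x) ≥ (1/2)(Δf(x))² + ((1/2)t(x) - 1)·Γ(f,f)(x)`. -/
theorem CD_inequality_triangles (G : SimpleGraph V) [G.LocallyFinite]
    [DecidableRel G.Adj] [DecidableEq V]
    (hG : G.Connected) (f : V → ℝ) (x : V) :
    gam2 G f x ≥
      (1 / 2) * (lap G f x) ^ 2 + ((1 / 2) * tfun G x - 1) * gam G f f x :=
  CD_inequality_triangles_general G f x
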